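/- For fixed α > 0 and β < 0, the ratio softplus_0(β(x+α)) / softplus_0(βx) tends to exp(βα) as x → +∞. -/

import Mathlib

open Filter Topology Asymptotics Real

theorem Real.isEquivalent_log_one_add_nhds_zero :
    (fun t : ℝ => log (1 + t)) ~[𝓝 0] id := by
  have hderiv : HasDerivAt (fun t : ℝ => log (1 + t)) 1 0 := by
    simpa using ((hasDerivAt_id (0 : ℝ)).const_add 1).log (by norm_num)
  -- `log (1 + t) - t = o(t)` is exactly the definition of `~[𝓝 0]`
  have hlittle := hasDerivAt_iff_isLittleO_nhds_zero.mp hderiv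
  simp only [zero_add, add_zero, log_one, sub_zero, smul_eq_mul, mul_one] at hlittle
  exact hlittle

theorem Real.isEquivalent_log_one_add_exp_mul_atTop {β : ℝ} (hβ : β < 0) :
    (fun x : ℝ => log (1 + exp (β * x))) ~[atTop] fun x => exp (β * x) :=
  isEquivalent_log_one_add_nhds_zero.comp_tendsto
    (tendsto_exp_atBot.comp (tendsto_id.const_mul_atTop_of_neg hβ))

theorem softplus_ratio_tendsto_general (α β : ℝ) (hβ : β < 0) :
    Filter.Tendsto
      (fun x : ℝ => Real.log (1 + Real.exp (β * (x + α))) / Real.log (1 + Real.exp (β * x)))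
      Filter.atTop (nhds (Real.exp (β * α))) := by
  have hequiv := isEquivalent_log_one_add_exp_mul_atTop hβ
  have hshift := hequiv.comp_tendsto (tendsto_atTop_add_const_right atTop α tendsto_id)
  -- the ratio of the equivalents is the constant `exp (β * α)`
  refine (hshift.div hequiv).symm.tendsto_nhds (tendsto_const_nhds.congr fun x => ?_)
  simp only [Function.comp_apply, Pi.div_apply, id, mul_add, exp_add]
  field_simp

theorem softplus_ratio_tendsto (α β : ℝ) (hα : 0 < α) (hβ : β < 0) :
    Filter.Tendsto
      (fun x : ℝ => Real.log (1 + Real.exp (β * (x + α))) / Real.log (1 + Real.exp (β * x)))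
      Filter.atTop (nhds (Real.exp (β * α))) :=
  softplus_ratio_tendsto_general α β hβ
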